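/- arXiv:2303.13298 — 2 statements merged into one kernel-verified Lean document; each statement's English description precedes it below -/
import Mathlib

section
/- Let M_ψ be a Lorentz ideal of B(H) and let τ_ψ be a ‖·‖_{M_ψ}-bounded singular trace on M_ψ. Suppose that for some 0 < ε < 1 there exists a constant C > 0 such that ψ(t) ≤ C·t^ε for all t ≥ 1. Then for every α > 1/(1−ε), every operator A in the root ideal M_ψ^α = {A ∈ B(H) : |A|^{1/α} ∈ M_ψ} satisfies the singular value estimate s(n,A) ≤ const·(1+n)^{−α(1−ε)} for all n ≥ 0 (with a constant independent of n), hence A is trace class, and consequently τ_ψ(A) = 0 for every A ∈ M_ψ^α, i.e. τ_ψ(M_ψ^α) = {0}. -/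
/-! The decay estimate is elementary: the singular values decrease, so `(n+1) s(n,A)^{1/α}` is
at most the `n`-th partial sum of `s(·,A)^{1/α}`, hence at most `M' ψ(n+1) ≤ M' C (n+1)^ε`;
taking `α`-th powers gives `s(n,A) ≤ c (n+1)^{-α(1-ε)}`, which is summable as `α(1-ε) > 1`.

For the trace, let `F` have rank at most `m`. Then `s(k+m, A-F) ≤ s(k,A)`, so every partial sum
of `s(·,A-F)` is at most `2m‖A-F‖ + Σ_{j≥m} s(j,A)`. Since `ψ ≥ ψ(1) > 0` on `[1,∞)` (a concave
function tending to `∞` is increasing), `A - F ∈ M_ψ` with norm at most that quantity over `ψ(1)`,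
and `τ(A) = τ(A-F)` as `τ` is singular. Taking the infimum over `F` replaces `‖A-F‖` by `s(m,A)`,
and for `m = 2j` the bound is `O(Σ_{i≥j} s(i,A))` because `j s(2j,A) ≤ Σ_{i≥j} s(i,A)`. -/

/- Encoding notes: the Hilbert space is an arbitrary complex Hilbert space; singular values are
defined as approximation numbers; membership of `|A|^{1/α}` in `M_ψ` is encoded via the
identity `s(k,|A|^{1/α}) = s(k,A)^{1/α}`; the trace is encoded as a globally defined linear
functional whose restriction to `M_ψ` has the trace/boundedness/singularity properties;
"trace class" is encoded as summability of the singular values. -/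

open MeasureTheory Complex Real Filter Topology

noncomputable section

variable {H : Type*} [NormedAddCommGroup H] [InnerProductSpace ℂ H] [CompleteSpace H]

/-- The `k`-th singular value (approximation number) of a bounded operator. -/
def singVal (A : H →L[ℂ] H) (k : ℕ) : ℝ :=
  sInf {r : ℝ | ∃ F : H →L[ℂ] H, FiniteDimensional ℂ (LinearMap.range (F : H →ₗ[ℂ] H)) ∧
    Module.finrank ℂ (LinearMap.range (F : H →ₗ[ℂ] H)) ≤ k ∧ r = ‖A - F‖}

/-- Membership in the Lorentz ideal `M_ψ`:
`sup_n (1/ψ(1+n)) Σ_{k=0}^n s(k,A) < ∞`. -/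
def MemLorentz (ψ : ℝ → ℝ) (A : H →L[ℂ] H) : Prop :=
  ∃ M : ℝ, ∀ n : ℕ, (∑ k ∈ Finset.range (n + 1), singVal A k) ≤ M * ψ ((n : ℝ) + 1)

/-- The Lorentz ideal norm `‖A‖_{M_ψ} = sup_n (1/ψ(1+n)) Σ_{k=0}^n s(k,A)`. -/
def lorentzNrm (ψ : ℝ → ℝ) (A : H →L[ℂ] H) : ℝ :=
  ⨆ n : ℕ, (∑ k ∈ Finset.range (n + 1), singVal A k) / ψ ((n : ℝ) + 1)

end

theorem ConcaveOn.monotoneOn_of_tendsto_atTop {f : ℝ → ℝ} {a : ℝ}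
    (hf : ConcaveOn ℝ (Set.Ioi a) f) (htop : Tendsto f atTop atTop) :
    MonotoneOn f (Set.Ioi a) := by
  intro x hx y hy hxy
  obtain ⟨b, hfb, hyb⟩ := ((htop.eventually_ge_atTop (f x)).and (eventually_ge_atTop y)).exists
  have hb : b ∈ Set.Ioi a := lt_of_lt_of_le hy hyb
  have := hf.ge_on_segment hx hb (by rw [segment_eq_Icc (hxy.trans hyb)]; exact ⟨hxy, hyb⟩)
  rwa [min_eq_left hfb] at this

theorem Antitone.le_rpow_of_sum_rpow_le {s : ℕ → ℝ} (hs : Antitone s) (hs0 : ∀ k, 0 ≤ s k)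
    {α ε K : ℝ} (hα : 0 < α)
    (h : ∀ n : ℕ, ∑ k ∈ Finset.range (n + 1), s k ^ (1 / α) ≤ K * ((n : ℝ) + 1) ^ ε) (n : ℕ) :
    s n ≤ K ^ α * ((1 : ℝ) + n) ^ (-(α * (1 - ε))) := by
  set x : ℝ := 1 + n
  have hx : 0 < x := by positivity
  have hmean : x * s n ^ (1 / α) ≤ K * x ^ ε :=
    calc x * s n ^ (1 / α) = ∑ _k ∈ Finset.range (n + 1), s n ^ (1 / α) := by simp [x, add_comm]
      _ ≤ ∑ k ∈ Finset.range (n + 1), s k ^ (1 / α) := Finset.sum_le_sum fun k hk =>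
          rpow_le_rpow (hs0 n) (hs (Finset.mem_range_succ_iff.1 hk)) (by positivity)
      _ ≤ K * x ^ ε := by simpa [x, add_comm] using h n
  have hroot : s n ^ (1 / α) ≤ K * x ^ (ε - 1) := by
    rw [rpow_sub hx, rpow_one, ← mul_div_assoc, le_div_iff₀' hx]
    exact hmean
  have hK : 0 ≤ K := (mul_nonneg_iff_of_pos_right (rpow_pos_of_pos hx _)).1
    ((rpow_nonneg (hs0 n) _).trans hroot)
  calc s n = (s n ^ (1 / α)) ^ α := by rw [← rpow_mul (hs0 n), one_div_mul_cancel hα.ne', rpow_one]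
    _ ≤ (K * x ^ (ε - 1)) ^ α := rpow_le_rpow (rpow_nonneg (hs0 n) _) hroot hα.le
    _ = K ^ α * x ^ (-(α * (1 - ε))) := by
        rw [mul_rpow hK (rpow_nonneg hx.le _), ← rpow_mul hx.le]
        ring_nf

theorem summable_one_add_nat_rpow_neg {p : ℝ} (hp : 1 < p) :
    Summable fun n : ℕ => ((1 : ℝ) + n) ^ (-p) := by
  refine ((Real.summable_one_div_nat_add_rpow 1 p).2 hp).congr fun n => ?_
  rw [abs_of_pos (by positivity), rpow_neg (by positivity), one_div, add_comm]

theorem Antitone.nat_mul_le_tsum_nat_add {f : ℕ → ℝ} (hf : Antitone f) (hf0 : ∀ k, 0 ≤ f k)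
    (hfs : Summable f) (j : ℕ) : j * f (2 * j) ≤ ∑' i, f (i + j) :=
  calc (j : ℝ) * f (2 * j) = ∑ _i ∈ Finset.range j, f (2 * j) := by simp
    _ ≤ ∑ i ∈ Finset.range j, f (i + j) :=
        Finset.sum_le_sum fun i hi => hf (by simp at hi; omega)
    _ ≤ ∑' i, f (i + j) :=
        ((summable_nat_add_iff j).2 hfs).sum_le_tsum _ fun i _ => hf0 _

variable {H : Type*} [NormedAddCommGroup H] [InnerProductSpace ℂ H]

def RankLE (F : H →L[ℂ] H) (k : ℕ) : Prop :=
  FiniteDimensional ℂ (LinearMap.range (F : H →ₗ[ℂ] H)) ∧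
    Module.finrank ℂ (LinearMap.range (F : H →ₗ[ℂ] H)) ≤ k

theorem rankLE_zero (k : ℕ) : RankLE (0 : H →L[ℂ] H) k := by
  rw [RankLE, ContinuousLinearMap.toLinearMap_zero, LinearMap.range_zero]
  exact ⟨inferInstance, by simp⟩

theorem RankLE.sub {F G : H →L[ℂ] H} {k m : ℕ} (hG : RankLE G k) (hF : RankLE F m) :
    RankLE (G - F) (k + m) := by
  obtain ⟨hGfin, hGk⟩ := hG
  obtain ⟨hFfin, hFm⟩ := hF
  have hle : LinearMap.range ((G - F : H →L[ℂ] H) : H →ₗ[ℂ] H) ≤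
      LinearMap.range (G : H →ₗ[ℂ] H) ⊔ LinearMap.range (F : H →ₗ[ℂ] H) := by
    rintro _ ⟨x, rfl⟩
    exact Submodule.sub_mem _ (Submodule.mem_sup_left ⟨x, rfl⟩) (Submodule.mem_sup_right ⟨x, rfl⟩)
  refine ⟨Submodule.finiteDimensional_of_le hle, ?_⟩
  calc _ ≤ Module.finrank ℂ
        (LinearMap.range (G : H →ₗ[ℂ] H) ⊔ LinearMap.range (F : H →ₗ[ℂ] H) : Submodule ℂ H) :=
        Submodule.finrank_mono hle
    _ ≤ _ := Submodule.finrank_add_le_finrank_add_finrank _ _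
    _ ≤ k + m := add_le_add hGk hFm

theorem singVal_nonneg (A : H →L[ℂ] H) (k : ℕ) : 0 ≤ singVal A k :=
  Real.sInf_nonneg (by rintro _ ⟨F, -, -, rfl⟩; exact norm_nonneg _)

theorem singVal_le_norm_sub (A : H →L[ℂ] H) {F : H →L[ℂ] H} {k : ℕ} (hF : RankLE F k) :
    singVal A k ≤ ‖A - F‖ :=
  csInf_le ⟨0, by rintro _ ⟨F, -, -, rfl⟩; exact norm_nonneg _⟩ ⟨F, hF.1, hF.2, rfl⟩

theorem singVal_le_norm (A : H →L[ℂ] H) (k : ℕ) : singVal A k ≤ ‖A‖ := by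
  simpa using singVal_le_norm_sub A (rankLE_zero k)

theorem le_singVal {A : H →L[ℂ] H} {k : ℕ} {r : ℝ} (h : ∀ F, RankLE F k → r ≤ ‖A - F‖) :
    r ≤ singVal A k :=
  le_csInf ⟨_, 0, (rankLE_zero k).1, (rankLE_zero k).2, rfl⟩
    (by rintro _ ⟨F, hF, hFk, rfl⟩; exact h F ⟨hF, hFk⟩)

theorem singVal_antitone (A : H →L[ℂ] H) : Antitone (singVal A) := fun _ _ hkl =>
  le_singVal fun _ hF => singVal_le_norm_sub A ⟨hF.1, hF.2.trans hkl⟩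

theorem singVal_sub_le (A : H →L[ℂ] H) {F : H →L[ℂ] H} {m : ℕ} (hF : RankLE F m) (k : ℕ) :
    singVal (A - F) (k + m) ≤ singVal A k :=
  le_singVal fun G hG => by
    simpa only [sub_sub_sub_cancel_right] using singVal_le_norm_sub (A - F) (hG.sub hF)

theorem le_add_mul_singVal {A : H →L[ℂ] H} {m : ℕ} {x a c : ℝ} (hc : 0 ≤ c)
    (h : ∀ F, RankLE F m → x ≤ a + c * ‖A - F‖) : x ≤ a + c * singVal A m := by
  rcases hc.eq_or_lt with rfl | hc
  · simpa using h 0 (rankLE_zero m)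
  · have : (x - a) / c ≤ singVal A m :=
      le_singVal fun F hF => (div_le_iff₀' hc).2 (by linarith [h F hF])
    linarith [(div_le_iff₀' hc).1 this]

theorem sum_range_singVal_sub_le (A : H →L[ℂ] H) {F : H →L[ℂ] H} {m : ℕ} (hF : RankLE F m)
    (hA : Summable (singVal A)) (n : ℕ) :
    ∑ k ∈ Finset.range n, singVal (A - F) k ≤
      2 * m * ‖A - F‖ + ∑' j, singVal A (j + m) := by
  calc ∑ k ∈ Finset.range n, singVal (A - F) k
      ≤ ∑ k ∈ Finset.range (2 * m + n), singVal (A - F) k :=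
        Finset.sum_le_sum_of_subset_of_nonneg (Finset.range_mono (by omega))
          fun k _ _ => singVal_nonneg _ k
    _ = ∑ k ∈ Finset.range (2 * m), singVal (A - F) k +
          ∑ j ∈ Finset.range n, singVal (A - F) (j + m + m) := by
        rw [Finset.sum_range_add]
        congr 1
        exact Finset.sum_congr rfl fun j _ => by congr 1; omega
    _ ≤ ∑ _k ∈ Finset.range (2 * m), ‖A - F‖ + ∑ j ∈ Finset.range n, singVal A (j + m) := by
        gcongr with k _ j _
        · exact singVal_le_norm _ k
        · exact singVal_sub_le A hF _
    _ ≤ 2 * m * ‖A - F‖ + ∑' j, singVal A (j + m) := by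
        gcongr
        · simp
        · exact ((summable_nat_add_iff m).2 hA).sum_le_tsum _ fun j _ => singVal_nonneg A _

theorem norm_le_of_sum_singVal_le {ψ : ℝ → ℝ} (τ : (H →L[ℂ] H) → ℂ) {M : ℝ}
    (hbdd : ∀ A : H →L[ℂ] H, MemLorentz ψ A → ‖τ A‖ ≤ M * lorentzNrm ψ A)
    (hψ1 : 0 < ψ 1) (hψ : ∀ n : ℕ, ψ 1 ≤ ψ ((n : ℝ) + 1)) {B : H →L[ℂ] H} {K : ℝ}
    (hB : ∀ n : ℕ, ∑ k ∈ Finset.range (n + 1), singVal B k ≤ K) :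
    ‖τ B‖ ≤ max M 0 * (K / ψ 1) := by
  have hK : 0 ≤ K := (Finset.sum_nonneg fun k _ => singVal_nonneg B k).trans (hB 0)
  have hmem : MemLorentz ψ B := ⟨K / ψ 1, fun n => (hB n).trans <| by
    rw [div_mul_eq_mul_div, le_div_iff₀ hψ1]
    exact mul_le_mul_of_nonneg_left (hψ n) hK⟩
  have hnorm : lorentzNrm ψ B ≤ K / ψ 1 :=
    ciSup_le fun n => div_le_div₀ hK (hB n) hψ1 (hψ n)
  have hnorm0 : 0 ≤ lorentzNrm ψ B := Real.iSup_nonneg fun n =>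
    div_nonneg (Finset.sum_nonneg fun k _ => singVal_nonneg B k) (hψ1.trans_le (hψ n)).le
  calc ‖τ B‖ ≤ M * lorentzNrm ψ B := hbdd B hmem
    _ ≤ max M 0 * lorentzNrm ψ B := by gcongr; exact le_max_left M 0
    _ ≤ max M 0 * (K / ψ 1) := by gcongr

theorem map_eq_zero_of_summable_singVal {ψ : ℝ → ℝ} (hψ1 : 0 < ψ 1)
    (hψ : ∀ n : ℕ, ψ 1 ≤ ψ ((n : ℝ) + 1)) (τ : (H →L[ℂ] H) →ₗ[ℂ] ℂ)
    (hsing : ∀ A : H →L[ℂ] H, FiniteDimensional ℂ (LinearMap.range (A : H →ₗ[ℂ] H)) → τ A = 0)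
    {M : ℝ} (hbdd : ∀ A : H →L[ℂ] H, MemLorentz ψ A → ‖τ A‖ ≤ M * lorentzNrm ψ A)
    {A : H →L[ℂ] H} (hA : Summable (singVal A)) : τ A = 0 := by
  set t : ℕ → ℝ := fun m => ∑' j, singVal A (j + m)
  set K := max M 0 / ψ 1
  have hK : 0 ≤ K := by positivity
  have hm : ∀ m : ℕ, ‖τ A‖ ≤ K * t m + K * (2 * m) * singVal A m := fun m =>
    le_add_mul_singVal (by positivity) fun F hF => by
      have hτ : τ A = τ (A - F) := by rw [map_sub, hsing F hF.1, sub_zero]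
      have := norm_le_of_sum_singVal_le τ hbdd hψ1 hψ fun n =>
        sum_range_singVal_sub_le A hF hA (n + 1)
      calc ‖τ A‖ ≤ max M 0 * ((2 * m * ‖A - F‖ + t m) / ψ 1) := hτ ▸ this
        _ = K * t m + K * (2 * m) * ‖A - F‖ := by ring
  have hj : ∀ j : ℕ, ‖τ A‖ ≤ K * (t (2 * j) + 4 * t j) := fun j => by
    have := (singVal_antitone A).nat_mul_le_tsum_nat_add (singVal_nonneg A) hA j
    calc ‖τ A‖ ≤ K * t (2 * j) + K * (2 * (2 * j : ℕ)) * singVal A (2 * j) := hm _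
      _ = K * t (2 * j) + 4 * K * (j * singVal A (2 * j)) := by push_cast; ring
      _ ≤ K * (t (2 * j) + 4 * t j) := by nlinarith
  have hlim : Tendsto (fun j : ℕ => K * (t (2 * j) + 4 * t j)) atTop (𝓝 0) := by
    have ht := tendsto_sum_nat_add (singVal A)
    simpa using ((ht.comp (tendsto_id.const_mul_atTop' two_pos)).add (ht.const_mul 4)).const_mul K
  exact norm_le_zero_iff.1 (ge_of_tendsto' hlim hj)

variable [CompleteSpace H]

theorem lorentz_root_ideal_singular_trace_vanishes_general
    (ψ : ℝ → ℝ)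
    (hψconc : ConcaveOn ℝ (Set.Ioi 0) ψ)
    (hψpos : ∀ t : ℝ, 0 < t → 0 < ψ t)
    (hψtop : Tendsto ψ atTop atTop)
    (ε C : ℝ) (hε1 : ε < 1)
    (hgrow : ∀ t : ℝ, 1 ≤ t → ψ t ≤ C * t ^ ε)
    -- a ‖·‖_{M_ψ}-bounded singular trace on `M_ψ`
    (τ : (H →L[ℂ] H) →ₗ[ℂ] ℂ)
    (hsing : ∀ A : H →L[ℂ] H,
      FiniteDimensional ℂ (LinearMap.range (A : H →ₗ[ℂ] H)) → τ A = 0)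
    (M : ℝ) (hbdd : ∀ A : H →L[ℂ] H, MemLorentz ψ A → ‖τ A‖ ≤ M * lorentzNrm ψ A)
    -- the exponent and an element of the root ideal `M_ψ^α`, i.e. `|A|^{1/α} ∈ M_ψ`,
    -- encoded via `s(k, |A|^{1/α}) = s(k,A)^{1/α}`
    (α : ℝ) (hα : 1 / (1 - ε) < α)
    (A : H →L[ℂ] H)
    (hA : ∃ M' : ℝ, ∀ n : ℕ,
      (∑ k ∈ Finset.range (n + 1), (singVal A k) ^ (1 / α)) ≤ M' * ψ ((n : ℝ) + 1)) :
    (∃ c : ℝ, ∀ n : ℕ, singVal A n ≤ c * ((1 : ℝ) + n) ^ (-(α * (1 - ε)))) ∧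
    Summable (fun k => singVal A k) ∧ τ A = 0 := by
  obtain ⟨M', hM'⟩ := hA
  have hψ1 : 0 < ψ 1 := hψpos 1 one_pos
  have hψmono : ∀ n : ℕ, ψ 1 ≤ ψ ((n : ℝ) + 1) := fun n =>
    hψconc.monotoneOn_of_tendsto_atTop hψtop (Set.mem_Ioi.2 one_pos)
      (Set.mem_Ioi.2 (by positivity)) (by simp)
  have hα0 : 0 < α := (one_div_pos.2 (sub_pos.2 hε1)).trans hα
  have hp : 1 < α * (1 - ε) := by rwa [div_lt_iff₀ (sub_pos.2 hε1)] at hα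
  have hM'0 : 0 ≤ M' := by
    have h0 := (Finset.sum_nonneg fun k _ => rpow_nonneg (singVal_nonneg A k) (1 / α)).trans (hM' 0)
    rw [Nat.cast_zero, zero_add] at h0
    exact (mul_nonneg_iff_of_pos_right hψ1).1 h0
  have hdecay := (singVal_antitone A).le_rpow_of_sum_rpow_le (singVal_nonneg A) hα0 fun n =>
    (hM' n).trans <| by
      rw [mul_assoc]
      exact mul_le_mul_of_nonneg_left (hgrow _ (by simp)) hM'0
  have hsum : Summable (singVal A) := Summable.of_nonneg_of_le (singVal_nonneg A) hdecay
    ((summable_one_add_nat_rpow_neg hp).mul_left _)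
  exact ⟨⟨_, hdecay⟩, hsum, map_eq_zero_of_summable_singVal hψ1 hψmono τ hsing hbdd hsum⟩

theorem lorentz_root_ideal_singular_trace_vanishes
    (ψ : ℝ → ℝ)
    (hψconc : ConcaveOn ℝ (Set.Ioi 0) ψ)
    (hψpos : ∀ t : ℝ, 0 < t → 0 < ψ t)
    (hψtop : Tendsto ψ atTop atTop)
    (ε C : ℝ) (hε0 : 0 < ε) (hε1 : ε < 1) (hC : 0 < C)
    (hgrow : ∀ t : ℝ, 1 ≤ t → ψ t ≤ C * t ^ ε)
    -- a ‖·‖_{M_ψ}-bounded singular trace on `M_ψ`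
    (τ : (H →L[ℂ] H) →ₗ[ℂ] ℂ)
    (hcyc : ∀ A B : H →L[ℂ] H, MemLorentz ψ A → τ (A * B) = τ (B * A))
    (hsing : ∀ A : H →L[ℂ] H,
      FiniteDimensional ℂ (LinearMap.range (A : H →ₗ[ℂ] H)) → τ A = 0)
    (M : ℝ) (hbdd : ∀ A : H →L[ℂ] H, MemLorentz ψ A → ‖τ A‖ ≤ M * lorentzNrm ψ A)
    -- the exponent and an element of the root ideal `M_ψ^α`, i.e. `|A|^{1/α} ∈ M_ψ`,
    -- encoded via `s(k, |A|^{1/α}) = s(k,A)^{1/α}`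
    (α : ℝ) (hα : 1 / (1 - ε) < α)
    (A : H →L[ℂ] H)
    (hA : ∃ M' : ℝ, ∀ n : ℕ,
      (∑ k ∈ Finset.range (n + 1), (singVal A k) ^ (1 / α)) ≤ M' * ψ ((n : ℝ) + 1)) :
    (∃ c : ℝ, ∀ n : ℕ, singVal A n ≤ c * ((1 : ℝ) + n) ^ (-(α * (1 - ε)))) ∧
    Summable (fun k => singVal A k) ∧ τ A = 0 :=
  lorentz_root_ideal_singular_trace_vanishes_general ψ hψconc hψpos hψtop ε C hε1 hgrow τ hsing M
    hbdd α hα A hA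
end

section
/- Let n ≥ 2 and let H₁,…,H_{n+2} be (not necessarily bounded) self-adjoint operators in H. (i) For every f ∈ C(ℝⁿ) ∩ L¹(ℝⁿ) with f̂ ∈ L¹(ℝⁿ), the multilinear map T_f^{H₁,…,Hₙ} : B(H)×···×B(H) → B(H) is bounded with ‖T_f^{H₁,…,Hₙ}‖ ≤ (2π)^{−n/2} ‖f̂‖_{L¹(ℝⁿ)}. (ii) For every f ∈ W_1(ℝⁿ) and 1 ≤ j ≤ n, T_{f_j^{[1]}}^{H₁,…,H_{n+1}} is bounded with ‖T_{f_j^{[1]}}^{H₁,…,H_{n+1}}‖ ≤ (2π)^{−n/2} ‖(∂f/∂λ_j)^∧‖_{L¹(ℝⁿ)}. (iii) For every f ∈ W_2(ℝⁿ) and 1 ≤ j ≠ k ≤ n, T_{f_{j,k}^{[2]}}^{H₁,…,H_{n+2}} and T_{f_j^{[2]}}^{H₁,…,H_{n+2}} are bounded with ‖T_{f_{j,k}^{[2]}}^{H₁,…,H_{n+2}}‖ ≤ (2π)^{−n/2} ‖(∂²f/∂λ_j∂λ_k)^∧‖_{L¹(ℝⁿ)} and ‖T_{f_j^{[2]}}^{H₁,…,H_{n+2}}‖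 ≤ (1/2)(2π)^{−n/2} ‖(∂²f/∂λ_j²)^∧‖_{L¹(ℝⁿ)}. -/
open MeasureTheory Complex Real Filter Topology

noncomputable section

variable {H : Type*} [NormedAddCommGroup H] [InnerProductSpace ℂ H] [CompleteSpace H]

/-- The symmetric-convention Fourier transform `f̂(ξ) = (2π)^{-n/2} ∫ e^{-i x·ξ} f(x) dx`. -/
def ft {n : ℕ} (f : (Fin n → ℝ) → ℂ) (ξ : Fin n → ℝ) : ℂ :=
  ((2 * π) ^ (-(n : ℝ) / 2) : ℝ) •
    ∫ x : Fin n → ℝ, Complex.exp (-Complex.I * ∑ j, (x j : ℂ) * (ξ j : ℂ)) * f x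

/-- The partial derivative `∂f/∂λⱼ`. -/
def pd {n : ℕ} (j : Fin n) (f : (Fin n → ℝ) → ℂ) (x : Fin n → ℝ) : ℂ :=
  fderiv ℝ f x (Pi.single j 1)

/-- The Wiener class `W₁(ℝⁿ)`. -/
def MemW1 {n : ℕ} (f : (Fin n → ℝ) → ℂ) : Prop :=
  ContDiff ℝ 1 f ∧ Integrable f ∧ Integrable (ft f) ∧
    ∀ j : Fin n, Integrable (pd j f) ∧ Integrable (ft (pd j f))

/-- The Wiener class `W₂(ℝⁿ)`. -/
def MemW2 {n : ℕ} (f : (Fin n → ℝ) → ℂ) : Prop :=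
  ContDiff ℝ 2 f ∧ Integrable f ∧ Integrable (ft f) ∧
    (∀ j : Fin n, Integrable (pd j f) ∧ Integrable (ft (pd j f))) ∧
    ∀ j k : Fin n, Integrable (pd k (pd j f)) ∧ Integrable (ft (pd k (pd j f)))

/-- A strongly continuous one-parameter unitary group: a faithful stand-in for
`t ↦ e^{itA}` with `A` a (possibly unbounded) self-adjoint operator, by Stone's theorem. -/
structure IsUnitaryGroup (U : ℝ → (H →L[ℂ] H)) : Prop where
  map_zero : U 0 = 1
  map_add : ∀ s t : ℝ, U (s + t) = U s * U t
  star_eq : ∀ t : ℝ, ContinuousLinearMap.adjoint (U t) = U (-t)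
  strong_cont : ∀ x : H, Continuous fun t : ℝ => U t x

/-- Extension of `t : Fin n → ℝ` to `ℕ` by zero. -/
def fext {n : ℕ} (t : Fin n → ℝ) (l : ℕ) : ℝ := if h : l < n then t ⟨l, h⟩ else 0

/-- The multiple operator integral `T_f^{H₀,…,H_{n-1}}(V₀,…,V_{n-2})` (0-based indexing),
where `W j = e^{i·H_j}`:
`T_f(V) = (2π)^{-n/2} ∫ f̂(t) e^{it₀H₀}V₀ ⋯ V_{n-2} e^{it_{n-1}H_{n-1}} dt`. -/
def moi0 (n : ℕ) (g : (Fin n → ℝ) → ℂ) (W : ℕ → ℝ → (H →L[ℂ] H))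
    (V : ℕ → (H →L[ℂ] H)) : H →L[ℂ] H :=
  ((2 * π) ^ (-(n : ℝ) / 2) : ℝ) •
    ∫ t : Fin n → ℝ, ft g t •
      (List.ofFn fun l : Fin n => W l (t l) * (if (l : ℕ) < n - 1 then V l else 1)).prod

/-- The multiple operator integral `T_{f_j^{[1]}}^{H₀,…,Hₙ}(V₀,…,V_{n-1})` (0-based),
written out by the Fourier representation of the first-order divided difference:
`(i/(2π)^{n/2}) ∫∫₀^{t_j} f̂(t) (∏_{l<j} e^{it_lH_l}V_l) e^{i(t_j-s)H_j}V_j e^{isH_{j+1}}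
(∏_{l>j} V_l e^{it_lH_{l+1}}) ds dt`. -/
def moi1 (n : ℕ) (g : (Fin n → ℝ) → ℂ) (W : ℕ → ℝ → (H →L[ℂ] H)) (V : ℕ → (H →L[ℂ] H))
    (j : ℕ) : H →L[ℂ] H :=
  ((((2 * π) ^ (-(n : ℝ) / 2) : ℝ) : ℂ) * Complex.I) •
    ∫ t : Fin n → ℝ, ft g t •
      ∫ s in (0:ℝ)..(fext t j),
        (((List.range j).map fun l => W l (fext t l) * V l).prod) *
        (W j (fext t j - s) * V j * W (j+1) s) *
        (((List.range (n - 1 - j)).map fun m => V (j+1+m) * W (j+2+m) (fext t (j+1+m))).prod)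

/-- The multiple operator integral `T_{f_j^{[2]}}^{H₀,…,H_{n+1}}(V₀,…,Vₙ)` (0-based). -/
def moi2same (n : ℕ) (g : (Fin n → ℝ) → ℂ) (W : ℕ → ℝ → (H →L[ℂ] H))
    (V : ℕ → (H →L[ℂ] H)) (j : ℕ) : H →L[ℂ] H :=
  (-(((2 * π) ^ (-(n : ℝ) / 2) : ℝ) : ℂ)) •
    ∫ t : Fin n → ℝ, ft g t •
      ∫ s in (0:ℝ)..(fext t j), ∫ p in (0:ℝ)..s,
        (((List.range j).map fun l => W l (fext t l) * V l).prod) *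
        (W j (fext t j - s) * V j * W (j+1) (s - p) * V (j+1) * W (j+2) p) *
        (((List.range (n - 1 - j)).map fun m => V (j+2+m) * W (j+3+m) (fext t (j+1+m))).prod)

/-- The multiple operator integral `T_{f_{j,k}^{[2]}}^{H₀,…,H_{n+1}}(V₀,…,Vₙ)` for `j < k`
(0-based). -/
def moi2jk (n : ℕ) (g : (Fin n → ℝ) → ℂ) (W : ℕ → ℝ → (H →L[ℂ] H)) (V : ℕ → (H →L[ℂ] H))
    (j k : ℕ) : H →L[ℂ] H :=
  (-(((2 * π) ^ (-(n : ℝ) / 2) : ℝ) : ℂ)) •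
    ∫ t : Fin n → ℝ, ft g t •
      ∫ s in (0:ℝ)..(fext t j), ∫ p in (0:ℝ)..(fext t k),
        (((List.range j).map fun l => W l (fext t l) * V l).prod) *
        (W j (fext t j - s) * V j * W (j+1) s * V (j+1)) *
        (((List.range (k - 1 - j)).map fun m => W (j+2+m) (fext t (j+1+m)) * V (j+2+m)).prod) *
        (W (k+1) (fext t k - p) * V (k+1) * W (k+2) p) *
        (((List.range (n - 1 - k)).map fun m => V (k+2+m) * W (k+3+m) (fext t (k+1+m))).prod)

/-!
Each multiple operator integral is an absolutely convergent integral over the Fourier variable `t`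
of `f̂(t)` times a product of operators in which every factor other than the `Vₗ` has norm at most
one (a value of a unitary group), so the product has norm at most `∏ ‖Vₗ‖`. For the divided
differences this product is in addition integrated over `[0, t_j]`, over the rectangle
`[0, t_j] × [0, t_k]`, or over the triangle `0 ≤ p ≤ s ≤ t_j`, which contributes the weight
`|t_j|`, `|t_j t_k|`, or `t_j² / 2`. Integration by parts gives `(∂_j f)^∧(t) = i t_j f̂(t)`, so
these weights times `|f̂|` are exactly the moduli of the Fourier transforms of the derivatives.
-/

open Finset

lemma IsUnitaryGroup.mem_unitary {U : ℝ → (H →L[ℂ] H)} (hU : IsUnitaryGroup U) (t : ℝ) :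
    U t ∈ unitary (H →L[ℂ] H) := by
  rw [Unitary.mem_iff, ContinuousLinearMap.star_eq_adjoint, hU.star_eq, ← hU.map_add,
    ← hU.map_add, neg_add_cancel, add_neg_cancel, hU.map_zero]
  exact ⟨rfl, rfl⟩

lemma IsUnitaryGroup.norm_le_one {U : ℝ → (H →L[ℂ] H)} (hU : IsUnitaryGroup U) (t : ℝ) :
    ‖U t‖ ≤ 1 :=
  ContinuousLinearMap.opNorm_le_bound _ zero_le_one fun x => by
    rw [ContinuousLinearMap.norm_map_of_mem_unitary (hU.mem_unitary t), one_mul]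

section OperatorProducts

variable {A : Type*} [SeminormedRing A]

lemma norm_mul_le_of_norm_le_one_left {a b : A} (ha : ‖a‖ ≤ 1) : ‖a * b‖ ≤ ‖b‖ :=
  (norm_mul_le a b).trans (mul_le_of_le_one_left (norm_nonneg b) ha)

lemma norm_mul_le_of_norm_le_one_right {a b : A} (hb : ‖b‖ ≤ 1) : ‖a * b‖ ≤ ‖a‖ :=
  (norm_mul_le a b).trans (mul_le_of_le_one_right (norm_nonneg a) hb)

lemma norm_mul_mul_le_of_norm_le_one {a b c : A} (ha : ‖a‖ ≤ 1) (hc : ‖c‖ ≤ 1) :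
    ‖a * b * c‖ ≤ ‖b‖ :=
  (norm_mul_le_of_norm_le_one_right hc).trans (norm_mul_le_of_norm_le_one_left ha)

variable (h1 : ‖(1 : A)‖ ≤ 1)
include h1

lemma norm_list_prod_map_le {ι : Type*} {g : ι → A} {b : ι → ℝ} :
    ∀ {l : List ι}, (∀ i ∈ l, ‖g i‖ ≤ b i) → ‖(l.map g).prod‖ ≤ (l.map b).prod
  | [], _ => by simpa using h1
  | i :: l, h => by
    simpa using norm_mul_le_of_le (h i List.mem_cons_self)
      (norm_list_prod_map_le fun k hk => h k (List.mem_cons_of_mem i hk))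

lemma norm_prod_range_mul_le {r : ℕ} {u v : ℕ → A} (hu : ∀ m < r, ‖u m‖ ≤ 1) :
    ‖((List.range r).map fun m => u m * v m).prod‖ ≤ ∏ m ∈ range r, ‖v m‖ :=
  norm_list_prod_map_le h1 fun m hm =>
    norm_mul_le_of_norm_le_one_left (hu m (List.mem_range.1 hm))

lemma norm_prod_range_mul_le' {r : ℕ} {u v : ℕ → A} (hu : ∀ m < r, ‖u m‖ ≤ 1) :
    ‖((List.range r).map fun m => v m * u m).prod‖ ≤ ∏ m ∈ range r, ‖v m‖ :=
  norm_list_prod_map_le h1 fun m hm =>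
    norm_mul_le_of_norm_le_one_right (hu m (List.mem_range.1 hm))

lemma norm_prod_ofFn_mul_ite_le {n : ℕ} {u : Fin n → A} (hu : ∀ l, ‖u l‖ ≤ 1) (V : ℕ → A) :
    ‖(List.ofFn fun l : Fin n => u l * (if (l : ℕ) < n - 1 then V l else 1)).prod‖ ≤
      ∏ l ∈ range (n - 1), ‖V l‖ := by
  have hfactor : ∀ l : Fin n, ‖u l * (if (l : ℕ) < n - 1 then V l else 1)‖ ≤
      if (l : ℕ) < n - 1 then ‖V l‖ else 1 := fun l => by
    split_ifs
    · exact norm_mul_le_of_norm_le_one_left (hu l)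
    · exact (norm_mul_le_of_norm_le_one_right h1).trans (hu l)
  calc _ ≤ ∏ l : Fin n, if (l : ℕ) < n - 1 then ‖V l‖ else 1 := by
        rw [List.ofFn_eq_map, ← List.prod_ofFn, List.ofFn_eq_map]
        exact norm_list_prod_map_le h1 fun l _ => hfactor l
    _ = ∏ l ∈ range n, if l < n - 1 then ‖V l‖ else 1 :=
        Fin.prod_univ_eq_prod_range (fun l => if l < n - 1 then ‖V l‖ else 1) n
    _ = ∏ l ∈ range (n - 1), ‖V l‖ := by
        rw [← prod_filter]
        congr 1
        ext l
        simp only [mem_filter, mem_range]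
        omega

lemma norm_moi1_integrand_le {n j : ℕ} (hj : j < n) {W : ℕ → ℝ → A}
    (hW : ∀ m < n + 1, ∀ s, ‖W m s‖ ≤ 1) (V : ℕ → A) (τ : ℕ → ℝ) (a b : ℝ) :
    ‖((List.range j).map fun l => W l (τ l) * V l).prod * (W j a * V j * W (j + 1) b) *
        ((List.range (n - 1 - j)).map fun m =>
          V (j + 1 + m) * W (j + 2 + m) (τ (j + 1 + m))).prod‖ ≤
      ∏ l ∈ range n, ‖V l‖ := by
  obtain ⟨r, rfl⟩ : ∃ r, n = j + 1 + r := ⟨n - 1 - j, by omega⟩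
  rw [show j + 1 + r - 1 - j = r by omega, prod_range_add, prod_range_succ]
  exact norm_mul_le_of_le (norm_mul_le_of_le
    (norm_prod_range_mul_le h1 fun m hm => hW m (by omega) _)
    (norm_mul_mul_le_of_norm_le_one (hW j (by omega) a) (hW (j + 1) (by omega) b)))
    (norm_prod_range_mul_le' h1 fun m hm => hW _ (by omega) _)

lemma norm_moi2same_integrand_le {n j : ℕ} (hj : j < n) {W : ℕ → ℝ → A}
    (hW : ∀ m < n + 2, ∀ s, ‖W m s‖ ≤ 1) (V : ℕ → A) (τ : ℕ → ℝ) (a b c : ℝ) :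
    ‖((List.range j).map fun l => W l (τ l) * V l).prod *
        (W j a * V j * W (j + 1) b * V (j + 1) * W (j + 2) c) *
        ((List.range (n - 1 - j)).map fun m =>
          V (j + 2 + m) * W (j + 3 + m) (τ (j + 1 + m))).prod‖ ≤
      ∏ l ∈ range (n + 1), ‖V l‖ := by
  obtain ⟨r, rfl⟩ : ∃ r, n = j + 1 + r := ⟨n - 1 - j, by omega⟩
  have hmid : ‖W j a * V j * W (j + 1) b * V (j + 1) * W (j + 2) c‖ ≤ ‖V j‖ * ‖V (j + 1)‖ :=
    (norm_mul_le_of_norm_le_one_right (hW (j + 2) (by omega) c)).trans <|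
      norm_mul_le_of_le
        (norm_mul_mul_le_of_norm_le_one (hW j (by omega) a) (hW (j + 1) (by omega) b)) le_rfl
  calc _ ≤ (∏ l ∈ range j, ‖V l‖) * (‖V j‖ * ‖V (j + 1)‖) * ∏ m ∈ range r, ‖V (j + 2 + m)‖ := by
        rw [show j + 1 + r - 1 - j = r by omega]
        exact norm_mul_le_of_le (norm_mul_le_of_le
          (norm_prod_range_mul_le h1 fun m hm => hW m (by omega) _) hmid)
          (norm_prod_range_mul_le' h1 fun m hm => hW _ (by omega) _)
    _ = _ := by
        rw [show j + 1 + r + 1 = j + 2 + r by omega, prod_range_add, prod_range_succ,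
          prod_range_succ]
        ring

lemma norm_moi2jk_integrand_le {n j k : ℕ} (hjk : j < k) (hk : k < n) {W : ℕ → ℝ → A}
    (hW : ∀ m < n + 2, ∀ s, ‖W m s‖ ≤ 1) (V : ℕ → A) (τ : ℕ → ℝ) (a b c d : ℝ) :
    ‖((List.range j).map fun l => W l (τ l) * V l).prod *
        (W j a * V j * W (j + 1) b * V (j + 1)) *
        ((List.range (k - 1 - j)).map fun m =>
          W (j + 2 + m) (τ (j + 1 + m)) * V (j + 2 + m)).prod *
        (W (k + 1) c * V (k + 1) * W (k + 2) d) *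
        ((List.range (n - 1 - k)).map fun m =>
          V (k + 2 + m) * W (k + 3 + m) (τ (k + 1 + m))).prod‖ ≤
      ∏ l ∈ range (n + 1), ‖V l‖ := by
  obtain ⟨q, rfl⟩ : ∃ q, k = j + 1 + q := ⟨k - 1 - j, by omega⟩
  obtain ⟨r, rfl⟩ : ∃ r, n = j + 1 + q + 1 + r := ⟨n - 1 - (j + 1 + q), by omega⟩
  have hmid : ‖W j a * V j * W (j + 1) b * V (j + 1)‖ ≤ ‖V j‖ * ‖V (j + 1)‖ :=
    norm_mul_le_of_le
      (norm_mul_mul_le_of_norm_le_one (hW j (by omega) a) (hW (j + 1) (by omega) b)) le_rfl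
  calc _ ≤ (∏ l ∈ range j, ‖V l‖) * (‖V j‖ * ‖V (j + 1)‖) *
          (∏ m ∈ range q, ‖V (j + 2 + m)‖) * ‖V (j + 1 + q + 1)‖ *
          ∏ m ∈ range r, ‖V (j + 1 + q + 2 + m)‖ := by
        rw [show j + 1 + q - 1 - j = q by omega,
          show j + 1 + q + 1 + r - 1 - (j + 1 + q) = r by omega]
        exact norm_mul_le_of_le (norm_mul_le_of_le (norm_mul_le_of_le (norm_mul_le_of_le
          (norm_prod_range_mul_le h1 fun m hm => hW m (by omega) _) hmid)
          (norm_prod_range_mul_le h1 fun m hm => hW _ (by omega) _))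
          (norm_mul_mul_le_of_norm_le_one (hW _ (by omega) c) (hW _ (by omega) d)))
          (norm_prod_range_mul_le' h1 fun m hm => hW _ (by omega) _)
    _ = _ := by
        rw [show j + 1 + q + 1 + r + 1 = j + 2 + q + 1 + r by omega, prod_range_add,
          prod_range_succ, prod_range_add, prod_range_succ, prod_range_succ]
        ring_nf

end OperatorProducts

lemma norm_smul_integral_le_of_norm_le {α 𝕜 E : Type*} [MeasurableSpace α] {μ : Measure α}
    [NormedField 𝕜] [NormedAddCommGroup E] [NormedSpace ℝ E] [NormedSpace 𝕜 E] (κ : 𝕜)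
    {F : α → E} {b : α → ℝ} (hb : Integrable b μ) (hF : ∀ t, ‖F t‖ ≤ b t) :
    ‖κ • ∫ t, F t ∂μ‖ ≤ ‖κ‖ * ∫ t, b t ∂μ := by
  rw [norm_smul]
  gcongr
  exact norm_integral_le_of_norm_le hb (ae_of_all _ hF)

lemma norm_integral_integral_le_of_norm_le_const {E : Type*} [NormedAddCommGroup E]
    [NormedSpace ℝ E] {F : ℝ → ℝ → E} {C : ℝ} (hF : ∀ s p, ‖F s p‖ ≤ C) (a : ℝ) :
    ‖∫ s in (0 : ℝ)..a, ∫ p in (0 : ℝ)..s, F s p‖ ≤ C * (a ^ 2 / 2) := by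
  have hinner : ∀ s, ‖∫ p in (0 : ℝ)..s, F s p‖ ≤ C * |s - 0| ^ 1 := fun s => by
    simpa using intervalIntegral.norm_integral_le_of_norm_le_const (a := 0) (b := s)
      fun p _ => hF s p
  calc _ ≤ ∫ s in Set.uIoc 0 a, ‖∫ p in (0 : ℝ)..s, F s p‖ :=
        intervalIntegral.norm_integral_le_integral_norm_uIoc
    _ ≤ ∫ s in Set.uIoc 0 a, C * |s - 0| ^ 1 :=
        integral_mono_of_nonneg (ae_of_all _ fun _ => norm_nonneg _)
          (Continuous.integrableOn_uIoc (by fun_prop)) (ae_of_all _ hinner)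
    _ = C * (a ^ 2 / 2) := by
        rw [integral_const_mul, integral_pow_abs_sub_uIoc]
        norm_num [sq_abs]

lemma fext_coe {n : ℕ} (t : Fin n → ℝ) (j : Fin n) : fext t j = t j := dif_pos j.isLt

lemma differentiable_pd {n : ℕ} {f : (Fin n → ℝ) → ℂ} (hf : ContDiff ℝ 2 f) (j : Fin n) :
    Differentiable ℝ (pd j f) :=
  ((hf.fderiv_right (by norm_num)).differentiable one_ne_zero).clm_apply
    (differentiable_const _)

lemma ft_pd {n : ℕ} {f : (Fin n → ℝ) → ℂ} (hf : Differentiable ℝ f) (hfi : Integrable f)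
    {j : Fin n} (hdi : Integrable (pd j f)) (ξ : Fin n → ℝ) :
    ft (pd j f) ξ = Complex.I * ξ j * ft f ξ := by
  set e : (Fin n → ℝ) → ℂ := fun x => Complex.exp (-Complex.I * ∑ k, (x k : ℂ) * ξ k)
  let φ : (Fin n → ℝ) →L[ℝ] ℂ :=
    ∑ k, (-Complex.I * ξ k) • Complex.ofRealCLM.comp (ContinuousLinearMap.proj k)
  have he : e = fun x => Complex.exp (φ x) := funext fun x => by
    simp [e, φ, Finset.mul_sum, mul_comm, mul_left_comm]
  have he_deriv : ∀ x, HasFDerivAt e (Complex.exp (φ x) • φ) x := fun x => by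
    rw [he]
    exact φ.hasFDerivAt.cexp
  have he_pd : ∀ x, fderiv ℝ e x (Pi.single j 1) = -Complex.I * ξ j * e x := fun x => by
    rw [(he_deriv x).fderiv, smul_apply, he, smul_eq_mul, mul_comm]
    simp [φ, Pi.single_apply, apply_ite Complex.ofReal]
  have he_norm : ∀ x, ‖e x‖ ≤ 1 := fun x => by
    simp [e, Complex.norm_exp]
  have he_meas : AEStronglyMeasurable e volume :=
    (continuous_iff_continuousAt.2 fun x => (he_deriv x).continuousAt).aestronglyMeasurable
  have hef : Integrable fun x => e x * f x := hfi.bdd_mul he_meas (ae_of_all _ he_norm)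
  have hibp := integral_mul_fderiv_eq_neg_fderiv_mul_of_integrable (v := Pi.single j 1)
    (by simpa only [he_pd, mul_assoc] using hef.const_mul (-Complex.I * ξ j))
    (hdi.bdd_mul he_meas (ae_of_all _ he_norm)) hef
    (fun x _ => (he_deriv x).differentiableAt) (fun x _ => hf x)
  simp only [ft, pd]
  rw [hibp]
  simp_rw [he_pd, mul_assoc, integral_const_mul]
  simp only [e, Complex.real_smul]
  ring

lemma norm_ft_pd {n : ℕ} {f : (Fin n → ℝ) → ℂ} (hf : Differentiable ℝ f) (hfi : Integrable f)
    {j : Fin n} (hdi : Integrable (pd j f)) (ξ : Fin n → ℝ) :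
    ‖ft (pd j f) ξ‖ = |ξ j| * ‖ft f ξ‖ := by
  simp [ft_pd hf hfi hdi ξ]

section OperatorIntegralBounds

variable {n : ℕ} (g : (Fin n → ℝ) → ℂ) {W : ℕ → ℝ → (H →L[ℂ] H)} (V : ℕ → (H →L[ℂ] H))

lemma norm_moi0_le (hW : ∀ m < n, ∀ s, ‖W m s‖ ≤ 1) (hg : Integrable (ft g)) :
    ‖moi0 n g W V‖ ≤
      (2 * π) ^ (-(n : ℝ) / 2) * (∫ t, ‖ft g t‖) * ∏ l ∈ range (n - 1), ‖V l‖ := by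
  have hc : 0 ≤ (2 * π) ^ (-(n : ℝ) / 2) := by positivity
  refine (norm_smul_integral_le_of_norm_le _
    (hg.norm.mul_const (∏ l ∈ range (n - 1), ‖V l‖)) fun t => ?_).trans_eq ?_
  · rw [norm_smul]
    gcongr
    exact norm_prod_ofFn_mul_ite_le ContinuousLinearMap.norm_id_le (fun l => hW l l.isLt (t l)) V
  · rw [integral_mul_const, Real.norm_of_nonneg hc, mul_assoc]

lemma norm_moi1_le (hW : ∀ m < n + 1, ∀ s, ‖W m s‖ ≤ 1) (j : Fin n)
    (hg : Integrable fun t => |t j| * ‖ft g t‖) :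
    ‖moi1 n g W V j‖ ≤
      (2 * π) ^ (-(n : ℝ) / 2) * (∫ t, |t j| * ‖ft g t‖) * ∏ l ∈ range n, ‖V l‖ := by
  have hc : 0 ≤ (2 * π) ^ (-(n : ℝ) / 2) := by positivity
  refine (norm_smul_integral_le_of_norm_le _
    (hg.mul_const (∏ l ∈ range n, ‖V l‖)) fun t => ?_).trans_eq ?_
  · rw [norm_smul]
    calc _ ≤ ‖ft g t‖ * ((∏ l ∈ range n, ‖V l‖) * |fext t j - 0|) := by
          gcongr
          exact intervalIntegral.norm_integral_le_of_norm_le_const fun s _ =>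
            norm_moi1_integrand_le ContinuousLinearMap.norm_id_le j.isLt hW V (fext t) _ _
      _ = _ := by rw [sub_zero, fext_coe]; ring
  · rw [integral_mul_const, norm_mul, Complex.norm_I, Complex.norm_real, Real.norm_of_nonneg hc]
    ring

lemma norm_moi2same_le (hW : ∀ m < n + 2, ∀ s, ‖W m s‖ ≤ 1) (j : Fin n)
    (hg : Integrable fun t => t j ^ 2 * ‖ft g t‖) :
    ‖moi2same n g W V j‖ ≤
      1 / 2 * (2 * π) ^ (-(n : ℝ) / 2) * (∫ t, t j ^ 2 * ‖ft g t‖) *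
        ∏ l ∈ range (n + 1), ‖V l‖ := by
  have hc : 0 ≤ (2 * π) ^ (-(n : ℝ) / 2) := by positivity
  refine (norm_smul_integral_le_of_norm_le _
    (hg.mul_const ((∏ l ∈ range (n + 1), ‖V l‖) / 2)) fun t => ?_).trans_eq ?_
  · rw [norm_smul]
    calc _ ≤ ‖ft g t‖ * ((∏ l ∈ range (n + 1), ‖V l‖) * (fext t j ^ 2 / 2)) := by
          gcongr
          exact norm_integral_integral_le_of_norm_le_const (fun s p =>
            norm_moi2same_integrand_le ContinuousLinearMap.norm_id_le j.isLt hW V (fext t)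
              _ _ _) _
      _ = _ := by rw [fext_coe]; ring
  · rw [integral_mul_const, norm_neg, Complex.norm_real, Real.norm_of_nonneg hc]
    ring

lemma norm_moi2jk_le (hW : ∀ m < n + 2, ∀ s, ‖W m s‖ ≤ 1) {j k : Fin n} (hjk : (j : ℕ) < k)
    (hg : Integrable fun t => |t j| * |t k| * ‖ft g t‖) :
    ‖moi2jk n g W V j k‖ ≤
      (2 * π) ^ (-(n : ℝ) / 2) * (∫ t, |t j| * |t k| * ‖ft g t‖) *
        ∏ l ∈ range (n + 1), ‖V l‖ := by
  have hc : 0 ≤ (2 * π) ^ (-(n : ℝ) / 2) := by positivity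
  refine (norm_smul_integral_le_of_norm_le _
    (hg.mul_const (∏ l ∈ range (n + 1), ‖V l‖)) fun t => ?_).trans_eq ?_
  · rw [norm_smul]
    calc _ ≤ ‖ft g t‖ * ((∏ l ∈ range (n + 1), ‖V l‖) * |fext t k - 0| * |fext t j - 0|) := by
          gcongr
          exact intervalIntegral.norm_integral_le_of_norm_le_const fun s _ =>
            intervalIntegral.norm_integral_le_of_norm_le_const fun p _ =>
              norm_moi2jk_integrand_le ContinuousLinearMap.norm_id_le hjk k.isLt hW V (fext t)
                _ _ _ _
      _ = _ := by rw [sub_zero, sub_zero, fext_coe, fext_coe]; ring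
  · rw [integral_mul_const, norm_neg, Complex.norm_real, Real.norm_of_nonneg hc]
    ring

end OperatorIntegralBounds

theorem moi_bounds_general {n : ℕ}
    (U : ℕ → ℝ → (H →L[ℂ] H)) (hU : ∀ m < n + 2, IsUnitaryGroup (U m)) :
    -- (i)
    (∀ f : (Fin n → ℝ) → ℂ, Continuous f → Integrable f → Integrable (ft f) →
      ∀ V : ℕ → (H →L[ℂ] H),
        ‖moi0 n f U V‖ ≤
          ((2 * π) ^ (-(n : ℝ) / 2)) * (∫ t : Fin n → ℝ, ‖ft f t‖) *
            ∏ l ∈ Finset.range (n - 1), ‖V l‖) ∧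
    -- (ii)
    (∀ f : (Fin n → ℝ) → ℂ, MemW1 f → ∀ j : Fin n, ∀ V : ℕ → (H →L[ℂ] H),
        ‖moi1 n f U V j‖ ≤
          ((2 * π) ^ (-(n : ℝ) / 2)) * (∫ t : Fin n → ℝ, ‖ft (pd j f) t‖) *
            ∏ l ∈ Finset.range n, ‖V l‖) ∧
    -- (iii)
    (∀ f : (Fin n → ℝ) → ℂ, MemW2 f → ∀ j k : Fin n, ∀ V : ℕ → (H →L[ℂ] H),
        ((j : ℕ) < (k : ℕ) →
          ‖moi2jk n f U V j k‖ ≤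
            ((2 * π) ^ (-(n : ℝ) / 2)) * (∫ t : Fin n → ℝ, ‖ft (pd k (pd j f)) t‖) *
              ∏ l ∈ Finset.range (n + 1), ‖V l‖) ∧
        ‖moi2same n f U V j‖ ≤
          (1 / 2) * ((2 * π) ^ (-(n : ℝ) / 2)) *
            (∫ t : Fin n → ℝ, ‖ft (pd j (pd j f)) t‖) *
            ∏ l ∈ Finset.range (n + 1), ‖V l‖) := by
  have hW : ∀ m < n + 2, ∀ s, ‖U m s‖ ≤ 1 := fun m hm => (hU m hm).norm_le_one
  refine ⟨fun f _ _ hft V => norm_moi0_le f V (fun m hm => hW m (by omega)) hft, ?_, ?_⟩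
  · rintro f ⟨hf, hfi, -, hd⟩ j V
    have hnorm : (fun t => ‖ft (pd j f) t‖) = fun t => |t j| * ‖ft f t‖ :=
      funext (norm_ft_pd (hf.differentiable one_ne_zero) hfi (hd j).1)
    rw [hnorm]
    exact norm_moi1_le f V (fun m hm => hW m (by omega)) j (hnorm ▸ (hd j).2.norm)
  · rintro f ⟨hf, hfi, -, hd, hdd⟩ j k V
    have hnorm : ∀ k, (fun t => ‖ft (pd k (pd j f)) t‖) = fun t => |t j| * |t k| * ‖ft f t‖ :=
      fun k => funext fun t => by
        rw [norm_ft_pd (differentiable_pd hf j) (hd j).1 (hdd j k).1,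
          norm_ft_pd (hf.differentiable two_ne_zero) hfi (hd j).1]
        ring
    have hsq : (fun t => ‖ft (pd j (pd j f)) t‖) = fun t => t j ^ 2 * ‖ft f t‖ := by
      simp_rw [hnorm, abs_mul_abs_self, sq]
    refine ⟨fun hjk => ?_, ?_⟩
    · rw [hnorm]
      exact norm_moi2jk_le f V hW hjk (hnorm k ▸ (hdd j k).2.norm)
    · rw [hsq]
      exact norm_moi2same_le f V hW j (hsq ▸ (hdd j j).2.norm)

theorem moi_bounds {n : ℕ} (hn : 2 ≤ n)
    (U : ℕ → ℝ → (H →L[ℂ] H)) (hU : ∀ m < n + 2, IsUnitaryGroup (U m)) :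
    -- (i)
    (∀ f : (Fin n → ℝ) → ℂ, Continuous f → Integrable f → Integrable (ft f) →
      ∀ V : ℕ → (H →L[ℂ] H),
        ‖moi0 n f U V‖ ≤
          ((2 * π) ^ (-(n : ℝ) / 2)) * (∫ t : Fin n → ℝ, ‖ft f t‖) *
            ∏ l ∈ Finset.range (n - 1), ‖V l‖) ∧
    -- (ii)
    (∀ f : (Fin n → ℝ) → ℂ, MemW1 f → ∀ j : Fin n, ∀ V : ℕ → (H →L[ℂ] H),
        ‖moi1 n f U V j‖ ≤
          ((2 * π) ^ (-(n : ℝ) / 2)) * (∫ t : Fin n → ℝ, ‖ft (pd j f) t‖) *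
            ∏ l ∈ Finset.range n, ‖V l‖) ∧
    -- (iii)
    (∀ f : (Fin n → ℝ) → ℂ, MemW2 f → ∀ j k : Fin n, ∀ V : ℕ → (H →L[ℂ] H),
        ((j : ℕ) < (k : ℕ) →
          ‖moi2jk n f U V j k‖ ≤
            ((2 * π) ^ (-(n : ℝ) / 2)) * (∫ t : Fin n → ℝ, ‖ft (pd k (pd j f)) t‖) *
              ∏ l ∈ Finset.range (n + 1), ‖V l‖) ∧
        ‖moi2same n f U V j‖ ≤
          (1 / 2) * ((2 * π) ^ (-(n : ℝ) / 2)) *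
            (∫ t : Fin n → ℝ, ‖ft (pd j (pd j f)) t‖) *
            ∏ l ∈ Finset.range (n + 1), ‖V l‖) :=
  moi_bounds_general U hU
end
end
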